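/- If K is a convex body in ℝ^d whose centroid is at the origin, then the polar body K° satisfies K° ⊆ -d·K°. -/

import Mathlib

/-!
Put `g := 1 - ⟪p, ·⟫`, an affine function that is nonnegative on `K` and, since the centroid of
`K` is the origin, has integral `vol K` over `K`. For `x₀ ∈ K` the superlevel set `{g ≥ t} ∩ K`
contains the image of `K` under the homothety of centre `x₀` and ratio `1 - t / g x₀`, so the
layer-cake formula gives `∫_K g ≥ vol K * ∫₀^{g x₀} (1 - t / g x₀) ^ d dt = g x₀ * vol K / (d + 1)`.
Hence `g x₀ ≤ d + 1`, i.e. `⟪p, x₀⟫ ≥ -d`, which says that `-p / d ∈ K°`.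
-/

open MeasureTheory Set Pointwise

open AffineMap Module

theorem Convex.image_homothety_subset_superlevel_inter {E : Type*} [AddCommGroup E] [Module ℝ E]
    {K : Set E} (hK : Convex ℝ K) {x₀ : E} (hx₀ : x₀ ∈ K) {g : E →ᵃ[ℝ] ℝ}
    (hg : ∀ x ∈ K, 0 ≤ g x) {θ : ℝ} (hθ : θ ∈ Icc (0 : ℝ) 1) :
    homothety x₀ θ '' K ⊆ {x | (1 - θ) * g x₀ ≤ g x} ∩ K := by
  rintro - ⟨x, hx, rfl⟩
  refine ⟨?_, homothety_eq_lineMap x₀ θ x ▸ hK.lineMap_mem hx₀ hx hθ⟩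
  change _ ≤ g (homothety x₀ θ x)
  rw [homothety_eq_lineMap, g.apply_lineMap, lineMap_apply_ring]
  nlinarith [hg x hx, hθ.1]

theorem integral_one_sub_div_pow {L : ℝ} (hL : L ≠ 0) (n : ℕ) :
    ∫ t in (0 : ℝ)..L, (1 - t / L) ^ n = L / (n + 1) := by
  rw [intervalIntegral.integral_comp_div (fun u => (1 - u) ^ n) hL,
    intervalIntegral.integral_comp_sub_left (fun u => u ^ n), integral_pow]
  simp [div_self hL]
  field_simp

section AddHaar

variable {E : Type*} [NormedAddCommGroup E] [NormedSpace ℝ E] [FiniteDimensional ℝ E]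
  [MeasurableSpace E] [BorelSpace E] (μ : Measure E) [μ.IsAddHaarMeasure]
  {K : Set E} {x₀ : E} {g : E →ᵃ[ℝ] ℝ}

theorem Convex.ofReal_mul_measure_le_restrict_superlevel (hK : Convex ℝ K) (hx₀ : x₀ ∈ K)
    (hg : ∀ x ∈ K, 0 ≤ g x) {t : ℝ} (ht : t ∈ Icc 0 (g x₀)) :
    ENNReal.ofReal ((1 - t / g x₀) ^ finrank ℝ E) * μ K ≤ μ.restrict K {x | t ≤ g x} := by
  set θ := 1 - t / g x₀
  have hθ : θ ∈ Icc (0 : ℝ) 1 :=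
    ⟨sub_nonneg.2 (div_le_one_of_le₀ ht.2 (ht.1.trans ht.2)),
      sub_le_self _ (div_nonneg ht.1 (ht.1.trans ht.2))⟩
  have hθt : (1 - θ) * g x₀ = t := by
    rw [sub_sub_cancel, div_mul_cancel_of_imp fun h => le_antisymm (h ▸ ht.2) ht.1]
  have hsub := hK.image_homothety_subset_superlevel_inter hx₀ hg hθ
  rw [hθt] at hsub
  have hmeas : MeasurableSet {x | t ≤ g x} :=
    measurableSet_le measurable_const g.continuous_of_finiteDimensional.measurable
  calc ENNReal.ofReal (θ ^ finrank ℝ E) * μ K = μ (homothety x₀ θ '' K) := by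
        rw [Measure.addHaar_image_homothety, abs_of_nonneg (pow_nonneg hθ.1 _)]
    _ ≤ μ.restrict K {x | t ≤ g x} :=
        (measure_mono hsub).trans_eq (μ.restrict_apply hmeas).symm

theorem Convex.ofReal_div_mul_measure_le_setLIntegral (hK : Convex ℝ K) (hx₀ : x₀ ∈ K)
    (hg : ∀ x ∈ K, 0 ≤ g x) :
    ENNReal.ofReal (g x₀ / (finrank ℝ E + 1)) * μ K ≤ ∫⁻ x in K, ENNReal.ofReal (g x) ∂μ := by
  set L := g x₀
  set n := finrank ℝ E
  have hg_ae : 0 ≤ᵐ[μ.restrict K] g := (ae_restrict_mem₀ (hK.nullMeasurableSet μ)).mono hg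
  have hL : 0 ≤ L := hg x₀ hx₀
  rcases hL.eq_or_lt with hL0 | hLpos
  · simp [← hL0]
  calc ENNReal.ofReal (L / (n + 1)) * μ K
      = ENNReal.ofReal (∫ t in Ioc 0 L, (1 - t / L) ^ n) * μ K := by
        rw [← intervalIntegral.integral_of_le hL, integral_one_sub_div_pow hLpos.ne']
    _ = ∫⁻ t in Ioc 0 L, ENNReal.ofReal ((1 - t / L) ^ n) * μ K := by
        rw [lintegral_mul_const _ (by fun_prop), ofReal_integral_eq_lintegral_ofReal]
        · exact (by fun_prop : Continuous fun t : ℝ => (1 - t / L) ^ n).integrableOn_Ioc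
        · filter_upwards [ae_restrict_mem measurableSet_Ioc] with t ht
          exact pow_nonneg (sub_nonneg.2 (div_le_one_of_le₀ ht.2 hL)) n
    _ ≤ ∫⁻ t in Ioc 0 L, μ.restrict K {x | t ≤ g x} :=
        setLIntegral_mono' measurableSet_Ioc fun t ht =>
          hK.ofReal_mul_measure_le_restrict_superlevel μ hx₀ hg (Ioc_subset_Icc_self ht)
    _ ≤ ∫⁻ t in Ioi 0, μ.restrict K {x | t ≤ g x} := lintegral_mono_set Ioc_subset_Ioi_self
    _ = ∫⁻ x in K, ENNReal.ofReal (g x) ∂μ :=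
        (lintegral_eq_lintegral_meas_le _ hg_ae g.continuous_of_finiteDimensional.aemeasurable).symm

theorem Convex.div_mul_measureReal_le_setIntegral (hK : Convex ℝ K) (hKc : IsCompact K)
    (hx₀ : x₀ ∈ K) (hg : ∀ x ∈ K, 0 ≤ g x) :
    g x₀ / (finrank ℝ E + 1) * μ.real K ≤ ∫ x in K, g x ∂μ := by
  have hg_int : IntegrableOn g K μ :=
    g.continuous_of_finiteDimensional.continuousOn.integrableOn_compact hKc
  have hg_ae : 0 ≤ᵐ[μ.restrict K] g := (ae_restrict_mem₀ (hK.nullMeasurableSet μ)).mono hg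
  rw [← ENNReal.ofReal_le_ofReal_iff (integral_nonneg_of_ae hg_ae),
    ENNReal.ofReal_mul (div_nonneg (hg x₀ hx₀) (by positivity)),
    ofReal_measureReal hKc.measure_lt_top.ne, ofReal_integral_eq_lintegral_ofReal hg_int hg_ae]
  exact hK.ofReal_div_mul_measure_le_setLIntegral μ hx₀ hg

end AddHaar

theorem neg_finrank_le_inner_of_setAverage_eq_zero {E : Type*} [NormedAddCommGroup E]
    [InnerProductSpace ℝ E] [FiniteDimensional ℝ E] [MeasurableSpace E] [BorelSpace E]
    (μ : Measure E) [μ.IsAddHaarMeasure] {K : Set E} (hKc : IsCompact K) (hK : Convex ℝ K)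
    (hKint : (interior K).Nonempty) (hcentroid : ⨍ x in K, x ∂μ = 0) {p : E}
    (hp : ∀ x ∈ K, inner ℝ p x ≤ 1) {x₀ : E} (hx₀ : x₀ ∈ K) :
    -(finrank ℝ E : ℝ) ≤ inner ℝ p x₀ := by
  have hV : 0 < μ.real K := ENNReal.toReal_pos
    ((isOpen_interior.measure_pos μ hKint).trans_le (measure_mono interior_subset)).ne'
    hKc.measure_lt_top.ne
  have hid_int : IntegrableOn (fun x => x) K μ :=
    continuous_id.continuousOn.integrableOn_compact hKc
  have hKx : ∫ x in K, x ∂μ = 0 := by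
    rwa [setAverage_eq, smul_eq_zero_iff_right (inv_ne_zero hV.ne')] at hcentroid
  have hp_int : ∫ x in K, inner ℝ p x ∂μ = 0 := by
    simpa [hKx] using (innerSL ℝ p).integral_comp_comm hid_int
  let g : E →ᵃ[ℝ] ℝ := AffineMap.const ℝ E 1 - (innerₛₗ ℝ p).toAffineMap
  have hg_apply (x : E) : g x = 1 - inner ℝ p x := rfl
  have hg_int : ∫ x in K, g x ∂μ = μ.real K := by
    have hinner : IntegrableOn (fun x => inner ℝ p x) K μ :=
      (innerSL ℝ p).integrable_comp hid_int
    simp_rw [hg_apply]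
    rw [integral_sub (integrableOn_const (C := (1 : ℝ)) hKc.measure_lt_top.ne) hinner, hp_int]
    simp
  have hlower := hK.div_mul_measureReal_le_setIntegral μ hKc hx₀ (g := g)
    fun x hx => sub_nonneg.2 (hp x hx)
  rw [hg_int, hg_apply, mul_le_iff_le_one_left hV, div_le_one (by positivity)] at hlower
  linarith

theorem stmt_1 (d : ℕ) (K : Set (EuclideanSpace ℝ (Fin d)))
    (hKcompact : IsCompact K) (hKconv : Convex ℝ K)
    (hKint : (interior K).Nonempty)
    (hcentroid : ⨍ x in K, x ∂volume = 0) :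
    {p : EuclideanSpace ℝ (Fin d) | ∀ x ∈ K, inner ℝ p x ≤ (1 : ℝ)} ⊆
      (-(d : ℝ)) • {p : EuclideanSpace ℝ (Fin d) | ∀ x ∈ K, inner ℝ p x ≤ (1 : ℝ)} := by
  intro p hp
  rcases Nat.eq_zero_or_pos d with rfl | hd
  · exact ⟨0, fun x _ => by simp, Subsingleton.elim _ _⟩
  have hd' : (0 : ℝ) < d := by exact_mod_cast hd
  refine ⟨(-(d : ℝ))⁻¹ • p, fun x hx => ?_, smul_inv_smul₀ (neg_ne_zero.2 hd'.ne') p⟩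
  have hbound := neg_finrank_le_inner_of_setAverage_eq_zero volume hKcompact hKconv hKint
    hcentroid hp hx
  rw [finrank_euclideanSpace_fin] at hbound
  rw [real_inner_smul_left, inv_neg, neg_mul, neg_le, le_inv_mul_iff₀ hd']
  linarith
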